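/- One has the exact evaluation ∫_{ℝⁿ₊} xₙ⁴ |x̃|² (|x̃|² + (xₙ+𝔇)² − 1)^{−n} dx = ω_{n−2} · ((n−3)/(n+1)) · Iₙ^{n+2} · φ̃_{(n−1)/2}, where ω_{n−2} is the surface measure of the unit sphere S^{n−2} ⊂ ℝ^{n−1}; all integrals converge. -/

import Mathlib

noncomputable section

open Real MeasureTheory

/-- Points of `ℝⁿ` written as `(x̃, xₙ)` with `x̃ ∈ ℝ^{n-1}`. -/
abbrev Pt (n : ℕ) : Type := (Fin (n - 1) → ℝ) × ℝ

/-- Squared Euclidean norm of the tangential part `x̃`. -/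
def nsqT {m : ℕ} (y : Fin m → ℝ) : ℝ := ∑ i, (y i) ^ 2

/-- Tangential partial derivative `∂ᵢ`, `i = 1, …, n-1`. -/
def pdT {n : ℕ} (i : Fin (n - 1)) (f : Pt n → ℝ) (x : Pt n) : ℝ :=
  fderiv ℝ f x (Pi.single i 1, 0)

/-- Normal partial derivative `∂ₙ`. -/
def pdN {n : ℕ} (f : Pt n → ℝ) (x : Pt n) : ℝ :=
  fderiv ℝ f x (0, 1)

/-- Euclidean Laplacian `Δ = Σᵢ ∂ᵢᵢ + ∂ₙₙ`. -/
def lap {n : ℕ} (f : Pt n → ℝ) (x : Pt n) : ℝ :=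
  (∑ i, pdT i (pdT i f) x) + pdN (pdN f) x

/-- The standard bubble
`U(x) = αₙ |K|^{-(n-2)/4} (|x̃|² + (xₙ + 𝔇)² - 1)^{-(n-2)/2}`. -/
def bubble (n : ℕ) (K D : ℝ) (x : Pt n) : ℝ :=
  (4 * (n : ℝ) * ((n : ℝ) - 1)) ^ (((n : ℝ) - 2) / 4) * |K| ^ (-(((n : ℝ) - 2) / 4)) *
    (nsqT x.1 + (x.2 + D) ^ 2 - 1) ^ (-(((n : ℝ) - 2) / 2))

/-!
Integrate first over `x̃` with `xₙ = s` fixed. With `c = (s + 𝔇)² - 1 > 0`, polar coordinates in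
`ℝⁿ⁻¹` and the substitution `r = √c ρ` turn the fiber integral into `ω_{n-2} c^{-(n-1)/2} Iₙⁿ`;
the remaining integral over `s > 0` is `φ̃_{(n-1)/2}` after the shift `t = s + 𝔇`, and integrating
`d/dρ (ρⁿ⁺¹ (1 + ρ²)¹⁻ⁿ)` over `(0, ∞)` gives `(n + 1) Iₙⁿ = (n - 3) Iₙⁿ⁺²`. The integrand is
nonnegative, so finiteness of the iterated integral also gives integrability on the half-space.
-/

open Set Filter Topology Module

lemma abs_pow_le_one_add_sq_rpow (ρ : ℝ) (k : ℕ) : |ρ| ^ k ≤ (1 + ρ ^ 2) ^ ((k : ℝ) / 2) := by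
  have h : |ρ| ^ k = (|ρ| ^ 2) ^ ((k : ℝ) / 2) := by
    rw [← Real.rpow_natCast, ← Real.rpow_natCast, ← Real.rpow_mul (abs_nonneg ρ)]
    congr 1; push_cast; ring
  rw [h]
  exact Real.rpow_le_rpow (by positivity) (by rw [sq_abs]; linarith) (by positivity)

lemma integrable_pow_mul_one_add_sq_rpow (k : ℕ) {e : ℝ} (h : k + 1 < 2 * e) :
    Integrable (fun ρ : ℝ => ρ ^ k * (1 + ρ ^ 2) ^ (-e)) := by
  have hint := integrable_rpow_neg_one_add_norm_sq (E := ℝ) (μ := volume) (r := 2 * e - k)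
    (by rw [finrank_self]; push_cast; linarith)
  refine hint.mono' (by fun_prop) (.of_forall fun ρ => ?_)
  have hpos : 0 < 1 + ρ ^ 2 := by positivity
  rw [norm_mul, norm_pow, Real.norm_eq_abs, Real.norm_of_nonneg (by positivity), sq_abs]
  calc |ρ| ^ k * (1 + ρ ^ 2) ^ (-e) ≤ (1 + ρ ^ 2) ^ ((k : ℝ) / 2) * (1 + ρ ^ 2) ^ (-e) := by
        gcongr; exact abs_pow_le_one_add_sq_rpow ρ k
    _ = (1 + ρ ^ 2) ^ (-(2 * e - k) / 2) := by
        rw [← Real.rpow_add hpos]; congr 1; ring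

lemma integrable_pow_div_one_add_sq_pow {k N : ℕ} (h : k + 1 < 2 * N) :
    Integrable (fun ρ : ℝ => ρ ^ k / (1 + ρ ^ 2) ^ N) := by
  refine (integrable_pow_mul_one_add_sq_rpow k (e := N) (by exact_mod_cast h)).congr
    (.of_forall fun ρ => ?_)
  simp only [Real.rpow_neg (by positivity : (0 : ℝ) ≤ 1 + ρ ^ 2), Real.rpow_natCast, div_eq_mul_inv]

lemma integral_Ioi_pow_div_one_add_sq_pow_recurrence {k M : ℕ} (h : k + 1 < 2 * M) :
    ((k : ℝ) + 1) * ∫ ρ in Ioi (0 : ℝ), ρ ^ k / (1 + ρ ^ 2) ^ (M + 1) =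
      (2 * (M : ℝ) - k - 1) * ∫ ρ in Ioi (0 : ℝ), ρ ^ (k + 2) / (1 + ρ ^ 2) ^ (M + 1) := by
  set F : ℝ → ℝ := fun ρ => ρ ^ (k + 1) / (1 + ρ ^ 2) ^ M
  have hF' : ∀ ρ : ℝ, HasDerivAt F (((k : ℝ) + 1) * (ρ ^ k / (1 + ρ ^ 2) ^ (M + 1)) -
      (2 * (M : ℝ) - k - 1) * (ρ ^ (k + 2) / (1 + ρ ^ 2) ^ (M + 1))) ρ := by
    intro ρ
    obtain ⟨L, rfl⟩ : ∃ L, M = L + 1 := ⟨M - 1, by omega⟩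
    have hpos : 1 + ρ ^ 2 ≠ 0 := by positivity
    refine ((hasDerivAt_pow (k + 1) ρ).div (((hasDerivAt_pow 2 ρ).const_add 1).pow (L + 1))
      (pow_ne_zero _ hpos)).congr_deriv ?_
    simp only [Pi.pow_apply, Nat.add_sub_cancel, Nat.cast_add, Nat.cast_one, Nat.cast_ofNat]
    field_simp
    ring
  have hint1 : IntegrableOn (fun ρ : ℝ => ρ ^ k / (1 + ρ ^ 2) ^ (M + 1)) (Ioi 0) :=
    (integrable_pow_div_one_add_sq_pow (by omega)).integrableOn
  have hint2 : IntegrableOn (fun ρ : ℝ => ρ ^ (k + 2) / (1 + ρ ^ 2) ^ (M + 1)) (Ioi 0) :=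
    (integrable_pow_div_one_add_sq_pow (by omega)).integrableOn
  have hlim : Tendsto F atTop (𝓝 0) := by
    refine tendsto_of_tendsto_of_tendsto_of_le_of_le' tendsto_const_nhds tendsto_inv_atTop_zero
      ?_ ?_ <;> filter_upwards [eventually_ge_atTop 1] with ρ hρ
    · exact div_nonneg (pow_nonneg (by linarith) _) (by positivity)
    have hgrowth : ρ ^ (k + 1) * ρ ≤ (1 + ρ ^ 2) ^ M :=
      calc ρ ^ (k + 1) * ρ = ρ ^ (k + 2) := by ring
        _ ≤ (ρ ^ 2) ^ M := by rw [← pow_mul]; exact pow_le_pow_right₀ hρ (by omega)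
        _ ≤ (1 + ρ ^ 2) ^ M := by gcongr; linarith
    calc F ρ ≤ ρ ^ (k + 1) / (ρ ^ (k + 1) * ρ) :=
          div_le_div_of_nonneg_left (by positivity) (by positivity) hgrowth
      _ = ρ⁻¹ := by field_simp
  have hFTC := integral_Ioi_of_hasDerivAt_of_tendsto (f := F) (a := 0)
    (by fun_prop (disch := positivity))
    (fun ρ _ => hF' ρ) ((hint1.const_mul _).sub (hint2.const_mul _)) hlim
  rw [integral_sub (hint1.const_mul _) (hint2.const_mul _), integral_const_mul,
    integral_const_mul, show F 0 = 0 by simp [F], sub_self] at hFTC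
  linarith

lemma sqrt_mul_pow_div_sq_add_pow (k N : ℕ) {c : ℝ} (hc : 0 < c) (ρ : ℝ) :
    (√c * ρ) ^ k / ((√c * ρ) ^ 2 + c) ^ N = √c ^ k / c ^ N * (ρ ^ k / (1 + ρ ^ 2) ^ N) := by
  rw [show (√c * ρ) ^ 2 + c = c * (1 + ρ ^ 2) by rw [mul_pow, Real.sq_sqrt hc.le]; ring,
    mul_pow, mul_pow]
  field_simp

lemma integrableOn_Ioi_pow_div_sq_add_pow {k N : ℕ} (h : k + 1 < 2 * N) {c : ℝ} (hc : 0 < c) :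
    IntegrableOn (fun r : ℝ => r ^ k / (r ^ 2 + c) ^ N) (Ioi 0) := by
  have hscaled := ((integrable_pow_div_one_add_sq_pow h).integrableOn (s := Ioi 0)).const_mul
    (√c ^ k / c ^ N)
  simp_rw [← sqrt_mul_pow_div_sq_add_pow k N hc] at hscaled
  simpa using (integrableOn_Ioi_comp_mul_left_iff (fun r : ℝ => r ^ k / (r ^ 2 + c) ^ N) 0
    (Real.sqrt_pos.2 hc)).1 hscaled

lemma integral_Ioi_pow_div_sq_add_pow (k N : ℕ) {c : ℝ} (hc : 0 < c) :
    ∫ r in Ioi (0 : ℝ), r ^ k / (r ^ 2 + c) ^ N =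
      c ^ (((k : ℝ) + 1) / 2 - N) * ∫ ρ in Ioi (0 : ℝ), ρ ^ k / (1 + ρ ^ 2) ^ N := by
  have ha : 0 < √c := Real.sqrt_pos.2 hc
  have hscaled := integral_comp_mul_left_Ioi (fun r : ℝ => r ^ k / (r ^ 2 + c) ^ N) 0 ha
  simp only [sqrt_mul_pow_div_sq_add_pow k N hc, integral_const_mul, mul_zero, smul_eq_mul]
    at hscaled
  have hpow : c ^ (((k : ℝ) + 1) / 2 - N) = √c * (√c ^ k / c ^ N) := by
    rw [Real.rpow_sub hc, Real.rpow_natCast, ← mul_div_assoc, ← pow_succ', Real.sqrt_eq_rpow,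
      ← Real.rpow_mul_natCast hc.le]
    push_cast
    ring_nf
  rw [hpow, mul_assoc, hscaled, ← mul_assoc, mul_inv_cancel₀ ha.ne', one_mul]

section Radial

variable {E : Type*} [NormedAddCommGroup E] [NormedSpace ℝ E] [FiniteDimensional ℝ E]
  [MeasurableSpace E] [BorelSpace E] [Nontrivial E] (μ : Measure E) [μ.IsAddHaarMeasure]

lemma integrable_norm_pow_div_norm_sq_add_pow {j N : ℕ} (h : finrank ℝ E + j < 2 * N) {c : ℝ}
    (hc : 0 < c) : Integrable (fun x : E => ‖x‖ ^ j / (‖x‖ ^ 2 + c) ^ N) μ := by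
  rw [integrable_fun_norm_addHaar μ (f := fun r : ℝ => r ^ j / (r ^ 2 + c) ^ N)]
  simp only [smul_eq_mul, ← mul_div_assoc, ← pow_add]
  have := finrank_pos (R := ℝ) (M := E)
  exact integrableOn_Ioi_pow_div_sq_add_pow (by omega) hc

lemma integral_norm_pow_div_norm_sq_add_pow (j N : ℕ) {c : ℝ} (hc : 0 < c) :
    ∫ x : E, ‖x‖ ^ j / (‖x‖ ^ 2 + c) ^ N ∂μ =
      finrank ℝ E * μ.real (Metric.ball 0 1) * c ^ (((finrank ℝ E + j : ℕ) : ℝ) / 2 - N) *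
        ∫ ρ in Ioi (0 : ℝ), ρ ^ (finrank ℝ E - 1 + j) / (1 + ρ ^ 2) ^ N := by
  rw [integral_fun_norm_addHaar μ (fun r : ℝ => r ^ j / (r ^ 2 + c) ^ N)]
  simp only [smul_eq_mul, ← mul_div_assoc, ← pow_add]
  rw [integral_Ioi_pow_div_sq_add_pow _ _ hc, nsmul_eq_mul]
  have := finrank_pos (R := ℝ) (M := E)
  rw [show ((finrank ℝ E - 1 + j : ℕ) : ℝ) + 1 = ((finrank ℝ E + j : ℕ) : ℝ) by
    rw [← Nat.cast_add_one]; congr 1; omega]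
  ring

end Radial

lemma nsqT_nonneg {m : ℕ} (y : Fin m → ℝ) : 0 ≤ nsqT y :=
  Finset.sum_nonneg fun i _ => sq_nonneg (y i)

lemma nsqT_ofLp {m : ℕ} (z : EuclideanSpace ℝ (Fin m)) : nsqT (WithLp.ofLp z) = ‖z‖ ^ 2 := by
  simp [EuclideanSpace.norm_sq_eq, nsqT]

lemma integrable_nsqT_div_nsqT_add_pow {m N : ℕ} (hm : 0 < m) (h : m + 2 < 2 * N) {c : ℝ}
    (hc : 0 < c) : Integrable (fun y : Fin m → ℝ => nsqT y / (nsqT y + c) ^ N) := by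
  have : Nonempty (Fin m) := ⟨⟨0, hm⟩⟩
  rw [← (PiLp.volume_preserving_ofLp (Fin m)).integrable_comp_emb
    (MeasurableEquiv.toLp 2 (Fin m → ℝ)).symm.measurableEmbedding]
  simp only [Function.comp_def, nsqT_ofLp]
  exact integrable_norm_pow_div_norm_sq_add_pow _ (by simpa using h) hc

lemma integral_nsqT_div_nsqT_add_pow {m : ℕ} (hm : 0 < m) (N : ℕ) {c : ℝ} (hc : 0 < c) :
    ∫ y : Fin m → ℝ, nsqT y / (nsqT y + c) ^ N =
      m * volume.real (Metric.ball (0 : EuclideanSpace ℝ (Fin m)) 1) *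
        c ^ (((m : ℝ) + 2) / 2 - N) * ∫ ρ in Ioi (0 : ℝ), ρ ^ (m + 1) / (1 + ρ ^ 2) ^ N := by
  have : Nonempty (Fin m) := ⟨⟨0, hm⟩⟩
  rw [← (PiLp.volume_preserving_ofLp (Fin m)).integral_comp
    (MeasurableEquiv.toLp 2 (Fin m → ℝ)).symm.measurableEmbedding]
  simp only [nsqT_ofLp]
  rw [integral_norm_pow_div_norm_sq_add_pow _ _ _ hc, finrank_euclideanSpace_fin,
    show m - 1 + 2 = m + 1 by omega]
  push_cast
  ring

lemma integrableOn_Ioi_comp_add_iff {F : Type*} [NormedAddCommGroup F] (g : ℝ → F) (D : ℝ) :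
    IntegrableOn (fun s => g (s + D)) (Ioi 0) ↔ IntegrableOn g (Ioi D) := by
  have := (measurePreserving_add_right volume D).integrableOn_comp_preimage
    (MeasurableEquiv.addRight D).measurableEmbedding (f := g) (s := Ioi D)
  rwa [preimage_add_const_Ioi, sub_self] at this

lemma integral_Ioi_comp_add {F : Type*} [NormedAddCommGroup F] [NormedSpace ℝ F] (g : ℝ → F)
    (D : ℝ) :
    ∫ s in Ioi 0, g (s + D) = ∫ t in Ioi D, g t := by
  have := (measurePreserving_add_right volume D).setIntegral_preimage_emb
    (MeasurableEquiv.addRight D).measurableEmbedding g (Ioi D)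
  rwa [preimage_add_const_Ioi, sub_self] at this

lemma integrableOn_Ioi_pow_mul_sq_add_sub_one_rpow (k : ℕ) {D e : ℝ} (hD : 1 < D)
    (he : k + 1 < 2 * e) :
    IntegrableOn (fun s : ℝ => s ^ k * ((s + D) ^ 2 - 1) ^ (-e)) (Ioi 0) := by
  set c := min 1 (D ^ 2 - 1)
  have hc : 0 < c := lt_min one_pos (by nlinarith)
  refine (((integrable_pow_mul_one_add_sq_rpow k he).const_mul (c ^ (-e))).integrableOn).mono'
    (by fun_prop) (ae_restrict_of_forall_mem measurableSet_Ioi fun s (hs : 0 < s) => ?_)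
  have hlower : c * (1 + s ^ 2) ≤ (s + D) ^ 2 - 1 := by
    have := min_le_left 1 (D ^ 2 - 1)
    have := min_le_right 1 (D ^ 2 - 1)
    nlinarith
  have hpos : 0 < (s + D) ^ 2 - 1 := by nlinarith
  rw [Real.norm_of_nonneg (by positivity), ← mul_assoc, mul_comm (c ^ (-e)), mul_assoc,
    ← Real.mul_rpow hc.le (by positivity)]
  exact mul_le_mul_of_nonneg_left (Real.rpow_le_rpow_of_nonpos (by positivity) hlower
    (by linarith [Nat.cast_nonneg (α := ℝ) k])) (by positivity)

lemma integrable_prod_and_integral_prod_eq_of_fiberwise {α β : Type*} [MeasurableSpace α]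
    [MeasurableSpace β] {μ : Measure α} {ν : Measure β} [SFinite μ] [SFinite ν]
    {f : α × β → ℝ} {g : β → ℝ} (hf : AEStronglyMeasurable f (μ.prod ν))
    (hfiber : ∀ᵐ y ∂ν, (∀ x, 0 ≤ f (x, y)) ∧ Integrable (fun x => f (x, y)) μ ∧
      ∫ x, f (x, y) ∂μ = g y)
    (hg : Integrable g ν) :
    Integrable f (μ.prod ν) ∧ ∫ z, f z ∂(μ.prod ν) = ∫ y, g y ∂ν := by
  have hnorm : (fun y => ∫ x, ‖f (x, y)‖ ∂μ) =ᵐ[ν] g := by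
    filter_upwards [hfiber] with y hy
    simp only [Real.norm_of_nonneg (hy.1 _), hy.2.2]
  have hprod : Integrable f (μ.prod ν) :=
    (integrable_prod_iff' hf).2 ⟨hfiber.mono fun _ h => h.2.1, hg.congr hnorm.symm⟩
  refine ⟨hprod, (integral_prod_symm f hprod).trans (integral_congr_ae ?_)⟩
  filter_upwards [hfiber] with y h using h.2.2

lemma volume_restrict_upperHalfSpace (n : ℕ) :
    (volume : Measure (Pt n)).restrict {x | 0 < x.2} = volume.prod (volume.restrict (Ioi 0)) := by
  rw [show {x : Pt n | 0 < x.2} = univ ×ˢ Ioi 0 by ext; simp, Measure.volume_eq_prod,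
    ← Measure.prod_restrict, Measure.restrict_univ]

lemma upperHalfSpace_fiber {n : ℕ} (hn : 2 ≤ n) {D s : ℝ} (hc : 0 < (s + D) ^ 2 - 1) :
    (∀ y : Fin (n - 1) → ℝ, 0 ≤ s ^ 4 * nsqT y / (nsqT y + (s + D) ^ 2 - 1) ^ n) ∧
    Integrable (fun y : Fin (n - 1) → ℝ => s ^ 4 * nsqT y / (nsqT y + (s + D) ^ 2 - 1) ^ n) ∧
    ∫ y : Fin (n - 1) → ℝ, s ^ 4 * nsqT y / (nsqT y + (s + D) ^ 2 - 1) ^ n =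
      ((n : ℝ) - 1) * volume.real (Metric.ball (0 : EuclideanSpace ℝ (Fin (n - 1))) 1) *
        (∫ ρ in Ioi (0 : ℝ), ρ ^ n / (1 + ρ ^ 2) ^ n) *
          (s ^ 4 * ((s + D) ^ 2 - 1) ^ (-(((n : ℝ) - 1) / 2))) := by
  simp only [add_sub_assoc, mul_div_assoc]
  refine ⟨fun y => mul_nonneg (by positivity) (div_nonneg (nsqT_nonneg y)
    (pow_nonneg (add_nonneg (nsqT_nonneg y) hc.le) _)),
    (integrable_nsqT_div_nsqT_add_pow (by omega) (by omega) hc).const_mul _, ?_⟩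
  rw [integral_const_mul, integral_nsqT_div_nsqT_add_pow (by omega) _ hc,
    Nat.sub_add_cancel (by omega), Nat.cast_sub (by omega), Nat.cast_one]
  ring_nf

/-- `∫_{ℝⁿ₊} xₙ⁴ |x̃|² (|x̃|² + (xₙ+𝔇)² - 1)^{-n} dx
  = ω_{n-2} ((n-3)/(n+1)) Iₙ^{n+2} φ̃_{(n-1)/2}`,
where `ω_{n-2} = (n-1)·vol(B^{n-1})` is the surface measure of the unit sphere
`S^{n-2} ⊂ ℝ^{n-1}`; all integrals converge. -/
theorem stmt_13 (n : ℕ) (hn : 7 ≤ n) (D : ℝ) (hD : 1 < D)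
    (ω : ℝ)
    (hω : ω = ((n : ℝ) - 1) *
      (volume (Metric.ball (0 : EuclideanSpace ℝ (Fin (n - 1))) 1)).toReal) :
    IntegrableOn
      (fun x : Pt n => x.2 ^ 4 * nsqT x.1 / (nsqT x.1 + (x.2 + D) ^ 2 - 1) ^ n)
      {x : Pt n | 0 < x.2} ∧
    IntegrableOn (fun ρ : ℝ => ρ ^ (n + 2) / (1 + ρ ^ 2) ^ n) (Set.Ioi 0) ∧
    IntegrableOn (fun t : ℝ => (t - D) ^ 4 * (t ^ 2 - 1) ^ (-(((n : ℝ) - 1) / 2)))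
      (Set.Ioi D) ∧
    ∫ x in {x : Pt n | 0 < x.2},
        x.2 ^ 4 * nsqT x.1 / (nsqT x.1 + (x.2 + D) ^ 2 - 1) ^ n
      = ω * (((n : ℝ) - 3) / ((n : ℝ) + 1)) *
          (∫ ρ in Set.Ioi (0 : ℝ), ρ ^ (n + 2) / (1 + ρ ^ 2) ^ n) *
          ∫ t in Set.Ioi D, (t - D) ^ 4 * (t ^ 2 - 1) ^ (-(((n : ℝ) - 1) / 2)) := by
  have h7 : (7 : ℝ) ≤ n := by exact_mod_cast hn
  have hφ := integrableOn_Ioi_pow_mul_sq_add_sub_one_rpow 4 hD (e := ((n : ℝ) - 1) / 2)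
    (by push_cast; linarith)
  set F : Pt n → ℝ := fun x => x.2 ^ 4 * nsqT x.1 / (nsqT x.1 + (x.2 + D) ^ 2 - 1) ^ n with hF
  obtain ⟨hint, hintegral⟩ := integrable_prod_and_integral_prod_eq_of_fiberwise (f := F)
    (by simp only [hF, nsqT]; exact Measurable.aestronglyMeasurable (by fun_prop))
    (ae_restrict_of_forall_mem measurableSet_Ioi fun s (hs : 0 < s) =>
      upperHalfSpace_fiber (by omega) (by nlinarith))
    (hφ.const_mul _)
  rw [← volume_restrict_upperHalfSpace] at hint hintegral
  have hrec := integral_Ioi_pow_div_one_add_sq_pow_recurrence (k := n) (M := n - 1) (by omega)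
  rw [Nat.sub_add_cancel (by omega), Nat.cast_sub (by omega), Nat.cast_one] at hrec
  refine ⟨hint, (integrable_pow_div_one_add_sq_pow (by omega)).integrableOn,
    (integrableOn_Ioi_comp_add_iff _ D).1 (by simpa using hφ), ?_⟩
  have hJ : ∫ ρ in Ioi (0 : ℝ), ρ ^ n / (1 + ρ ^ 2) ^ n =
      ((n : ℝ) - 3) / ((n : ℝ) + 1) * ∫ ρ in Ioi (0 : ℝ), ρ ^ (n + 2) / (1 + ρ ^ 2) ^ n := by
    field_simp
    linear_combination hrec
  rw [hintegral, integral_const_mul, ← integral_Ioi_comp_add _ D, hJ, hω, measureReal_def]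
  simp only [add_sub_cancel_right]
  ring
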